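/- arXiv:2002.09228 — 5 statements merged into one kernel-verified Lean document; each statement's English description precedes it below -/
import Mathlib

section
/- If t₁, …, tₙ are elements of a field F of characteristic p > 0 that form a separable transcendence basis of F over a subfield k, then the differentials dt₁, …, dtₙ are linearly independent in the F-vector space of absolute Kähler differentials Ω¹_{F/ℤ}. -/
/-!
The map `k[X₁,…,Xₙ] → F, Xᵢ ↦ tᵢ` factors as the localization `k[X] → k(X)`, the isomorphism
`k(X) ≃ k(t)` given by algebraic independence, and the separable extension `k(t) → F`. All three
are formally étale, so `Ω[F⁄k] ≃ F ⊗ Ω[k[X]⁄k]` is free on the `dtᵢ`. Linear independence over `k`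
implies linear independence over `ℤ`, since `Ω[F⁄ℤ] → Ω[F⁄k]` maps `d_ℤ tᵢ` to `d_k tᵢ`.
-/

open KaehlerDifferential MvPolynomial

namespace KaehlerDifferential

variable (R S σ : Type*) [CommRing R] [CommRing S] [Algebra R S]
  [Algebra (MvPolynomial σ R) S] [IsScalarTower R (MvPolynomial σ R) S]
  [Algebra.FormallyEtale (MvPolynomial σ R) S]

noncomputable def basisOfFormallyEtaleMvPolynomial : Module.Basis σ S Ω[S⁄R] :=
  ((mvPolynomialBasis R σ).baseChange S).map
    (tensorKaehlerEquivOfFormallyEtale R (MvPolynomial σ R) S)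

@[simp]
lemma basisOfFormallyEtaleMvPolynomial_apply (i : σ) :
    basisOfFormallyEtaleMvPolynomial R S σ i =
      D R S (algebraMap (MvPolynomial σ R) S (X i)) := by
  simp [basisOfFormallyEtaleMvPolynomial]

end KaehlerDifferential

theorem AlgebraicIndependent.linearIndependent_D_of_isSeparable {ι k F : Type*} [Field k]
    [Field F] [Algebra k F] {t : ι → F} (halg : AlgebraicIndependent k t)
    [Algebra.IsSeparable (IntermediateField.adjoin k (Set.range t)) F] :
    LinearIndependent F (fun i => D k F (t i)) := by
  let A := MvPolynomial ι k
  let K := FractionRing A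
  let : Algebra A F := (aeval t).toAlgebra
  let : Algebra K F := ((algebraMap _ F).comp halg.aevalEquivField.toRingHom).toAlgebra
  have : IsScalarTower k A F := .of_algebraMap_eq fun c => ((aeval t).commutes c).symm
  have : IsScalarTower A K F := .of_algebraMap_eq fun a =>
    (halg.aevalEquivField_algebraMap_apply_coe a).symm
  have : Algebra.IsSeparable K F := .of_equiv_equiv halg.aevalEquivField.symm.toRingEquiv
    (RingEquiv.refl F) (by ext; simp [RingHom.algebraMap_toAlgebra])
  have : Algebra.FormallyEtale A K := .of_isLocalization (nonZeroDivisors A)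
  have : Algebra.FormallyEtale K F := .of_isSeparable K F
  have : Algebra.FormallyEtale A F := .comp A K F
  have hbasis : ⇑(basisOfFormallyEtaleMvPolynomial k F ι) = fun i => D k F (t i) := by
    ext i
    simp [RingHom.algebraMap_toAlgebra]
  exact hbasis ▸ (basisOfFormallyEtaleMvPolynomial k F ι).linearIndependent

theorem stmt_0_general (k F : Type*) [Field k] [Field F] [Algebra k F]
    (n : ℕ) (t : Fin n → F)
    (halg : AlgebraicIndependent k t)
    (hsep : Algebra.IsSeparable (IntermediateField.adjoin k (Set.range t)) F) :
    LinearIndependent F (fun i : Fin n => KaehlerDifferential.D ℤ F (t i)) := by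
  refine .of_comp (map ℤ k F F) ?_
  simpa [Function.comp_def] using halg.linearIndependent_D_of_isSeparable

/-- If `t₁, …, tₙ ∈ F` form a separable transcendence basis of `F` over a subfield `k`
(i.e. they are algebraically independent over `k` and `F` is separable algebraic over
`k(t₁,…,tₙ)`), then the differentials `dt₁, …, dtₙ` are linearly independent in the
`F`-vector space of absolute Kähler differentials `Ω¹_{F/ℤ}`. -/
theorem stmt_0 (k F : Type*) [Field k] [Field F] [Algebra k F]
    (p : ℕ) (hp : p.Prime) [CharP F p]
    (n : ℕ) (t : Fin n → F)
    (halg : AlgebraicIndependent k t)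
    (hsep : Algebra.IsSeparable (IntermediateField.adjoin k (Set.range t)) F) :
    LinearIndependent F (fun i : Fin n => KaehlerDifferential.D ℤ F (t i)) :=
  stmt_0_general k F n t halg hsep
end

section
/- Let F ⊆ E be a separable field extension in characteristic p > 0. If t₁, …, tₙ ∈ F have linearly independent differentials dt₁, …, dtₙ in Ω¹_{F/ℤ}, then their images in E have linearly independent differentials in Ω¹_{E/ℤ}. -/
open TensorProduct in
/-- A (not necessarily algebraic) field extension `F ⊆ E` is separable if `K ⊗_F E` is
reduced for every field extension `K` of `F` (MacLane's criterion). -/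
def IsSeparableFieldExt (F : Type u) (E : Type v) [Field F] [Field E] [Algebra F E] : Prop :=
  ∀ (K : Type u) [Field K] [Algebra F K], IsReduced (K ⊗[F] E)

/-!
Linear independence of `dt₁, …, dtₙ` amounts to derivations `∂ⱼ` with `∂ⱼ tᵢ = δᵢⱼ`. By
induction on `n`, such derivations make the reduced monomials `t^α` (`0 ≤ αᵢ < p`) linearly
independent over `F^p`: the constants of `∂₁` form a subfield `K ⊇ F^p(t₂, …, tₙ)` over which
`t₁` has degree `p`. Separability says that `F^{1/p} ⊗_F E` is reduced, and a relation
`∑ c_α^p t^α = 0` in `E` makes `∑ c_α ⊗ (t^α)^{1/p}` nilpotent, so this independence passes to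
`E`. There it shows `tⱼ ∉ E^p(tᵢ : i ≠ j)`; a maximal subfield containing `E^p` and the `tᵢ`,
`i ≠ j`, but not `tⱼ` has `E` as its degree `p` extension generated by `tⱼ`, which carries
the derivation `d/dtⱼ`.
-/

open Polynomial TensorProduct

theorem linearIndependent_D_iff_exists_derivation {R L ι : Type*} [CommRing R] [Field L]
    [Algebra R L] (t : ι → L) :
    LinearIndependent L (fun i => KaehlerDifferential.D R L (t i)) ↔
      ∀ j, ∃ δ : Derivation R L L, δ (t j) = 1 ∧ ∀ i ≠ j, δ (t i) = 0 := by
  classical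
  constructor
  · intro hli j
    have hj : KaehlerDifferential.D R L (t j) ∉
        Submodule.span L ((fun i => KaehlerDifferential.D R L (t i)) '' {i | i ≠ j}) :=
      hli.notMem_span_image (by simp)
    obtain ⟨φ, hφ, hφj⟩ := LinearMap.exists_extend_of_notMem 0 hj (1 : L)
    refine ⟨φ.compDer (KaehlerDifferential.D R L), hφj, fun i hi => ?_⟩
    have hmem := Submodule.subset_span (R := L) (Set.mem_image_of_mem
      (fun i => KaehlerDifferential.D R L (t i)) (show i ∈ {i | i ≠ j} from hi))
    simpa using LinearMap.congr_fun hφ ⟨_, hmem⟩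
  · intro h
    choose δ hδ hδ' using h
    refine LinearIndependent.of_comp
      (LinearMap.pi fun j => (δ j).liftKaehlerDifferential) ?_
    have hcomp : (LinearMap.pi fun j => (δ j).liftKaehlerDifferential) ∘
        (fun i => KaehlerDifferential.D R L (t i)) = fun i => Pi.single i 1 := by
      ext i j
      simp only [Function.comp_apply, LinearMap.pi_apply,
        Derivation.liftKaehlerDifferential_comp_D, Pi.single_apply]
      split_ifs with hji
      · exact hji ▸ hδ j
      · exact hδ' j i (Ne.symm hji)
    rw [hcomp]
    exact Pi.linearIndependent_single_one ι L

def Derivation.constSubfield {R L : Type*} [CommRing R] [Field L] [Algebra R L]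
    (δ : Derivation R L L) : Subfield L where
  carrier := {y | δ y = 0}
  zero_mem' := δ.map_zero
  one_mem' := δ.map_one_eq_zero
  add_mem' {a b} ha hb := by simp_all
  mul_mem' {a b} ha hb := by simp_all [δ.leibniz]
  neg_mem' {a} ha := by simp_all
  inv_mem' a ha := by simp_all [δ.leibniz_inv]

theorem Derivation.mem_constSubfield {R L : Type*} [CommRing R] [Field L] [Algebra R L]
    {δ : Derivation R L L} {y : L} : y ∈ δ.constSubfield ↔ δ y = 0 :=
  Iff.rfl

theorem Derivation.exists_eq_one_of_adjoin_eq_top {K L : Type*} [Field K] [Field L] [Algebra K L]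
    {x : L} (hx : Algebra.adjoin K {x} = ⊤) (hd : derivative (minpoly K x) = 0) :
    ∃ δ : Derivation K L L, δ x = 1 := by
  have hsurj : Function.Surjective (aeval (R := K) x) := by
    rw [← AlgHom.range_eq_top, ← Algebra.adjoin_singleton_eq_range_aeval, hx]
  have hker : ∀ q : K[X], aeval x q = 0 → aeval x (derivative' q) = 0 := by
    intro q hq
    obtain ⟨r, rfl⟩ := minpoly.dvd K x hq
    simp [hd]
  refine ⟨Derivation.liftOfSurjective hsurj hker, ?_⟩
  simpa using Derivation.liftOfSurjective_apply hsurj hker X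

theorem Subfield.exists_le_maximal_notMem {E : Type*} [Field E] {K : Subfield E} {x : E}
    (hx : x ∉ K) : ∃ M, K ≤ M ∧ Maximal (fun M : Subfield E => x ∉ M) M := by
  refine zorn_le_nonempty₀ {M | x ∉ M} (fun c hc hchain y hy => ?_) K hx
  refine ⟨sSup c, fun hmem => ?_, fun z hz => le_sSup hz⟩
  obtain ⟨M, hM, hxM⟩ := (Subfield.mem_sSup_of_directedOn ⟨y, hy⟩ hchain.directedOn).mp hmem
  exact hc hM hxM

section PthPowers

variable {p : ℕ} [Fact p.Prime] {E : Type*} [Field E]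

theorem Subfield.isIntegral_of_pow_mem {K : Subfield E} (hK : ∀ y : E, y ^ p ∈ K) (x : E) :
    IsIntegral K x :=
  IsIntegral.of_pow (Fact.out : p.Prime).pos (isIntegral_algebraMap (x := (⟨x ^ p, hK x⟩ : K)))

variable [CharP E p]

theorem Subfield.minpoly_eq_X_pow_sub_C {K : Subfield E} (hK : ∀ y : E, y ^ p ∈ K) {x : E}
    (hx : x ∉ K) : minpoly K x = X ^ p - C ⟨x ^ p, hK x⟩ := by
  have hp : p.Prime := Fact.out
  refine (minpoly.eq_of_irreducible_of_monic ?_ ?_ (monic_X_pow_sub_C _ hp.ne_zero)).symm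
  · refine X_pow_sub_C_irreducible_of_prime hp fun b hb => hx ?_
    have hbx : (b : E) = x :=
      frobenius_inj E p (by simpa [frobenius_def] using congrArg Subtype.val hb)
    exact hbx ▸ b.2
  · simp only [map_sub, map_pow, aeval_X, aeval_C]
    exact sub_self (x ^ p)

theorem Subfield.finrank_adjoin_simple_of_pow_mem {K : Subfield E} (hK : ∀ y : E, y ^ p ∈ K)
    {x : E} (hx : x ∉ K) : Module.finrank K (IntermediateField.adjoin K {x}) = p := by
  rw [IntermediateField.adjoin.finrank (isIntegral_of_pow_mem hK x),
    minpoly_eq_X_pow_sub_C hK hx, natDegree_X_pow_sub_C]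

theorem Subfield.linearIndependent_pow_of_notMem {K : Subfield E} (hK : ∀ y : E, y ^ p ∈ K)
    {x : E} (hx : x ∉ K) :
    LinearIndependent K fun k : Fin p => x ^ (k : ℕ) := by
  have h := linearIndependent_pow (K := K) x
  rwa [minpoly_eq_X_pow_sub_C hK hx, natDegree_X_pow_sub_C] at h

theorem Subfield.adjoin_simple_eq_top_of_maximal {M : Subfield E} (hM : ∀ y : E, y ^ p ∈ M)
    {x : E} (hmax : Maximal (fun M : Subfield E => x ∉ M) M) :
    IntermediateField.adjoin M {x} = ⊤ := by
  refine eq_top_iff.mpr fun y _ => ?_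
  by_cases hy : y ∈ M
  · exact IntermediateField.algebraMap_mem _ (⟨y, hy⟩ : M)
  -- `M⟮y⟯` strictly contains `M`, so by maximality it contains `x`.
  have hxy : x ∈ IntermediateField.adjoin M {y} := by
    by_contra hxy
    refine hy (hmax.2 (y := (IntermediateField.adjoin M {y}).toSubfield) hxy (fun z hz => ?_)
      (IntermediateField.mem_adjoin_simple_self M y))
    exact IntermediateField.algebraMap_mem _ (⟨z, hz⟩ : M)
  have : FiniteDimensional M (IntermediateField.adjoin M {y}) :=
    IntermediateField.adjoin.finiteDimensional (isIntegral_of_pow_mem hM y)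
  have heq := IntermediateField.eq_of_le_of_finrank_eq
    (IntermediateField.adjoin_simple_le_iff.mpr hxy)
    (by rw [finrank_adjoin_simple_of_pow_mem hM hmax.1, finrank_adjoin_simple_of_pow_mem hM hy])
  exact heq ▸ IntermediateField.mem_adjoin_simple_self M y

theorem Subfield.exists_derivation_of_notMem {K : Subfield E} (hK : ∀ y : E, y ^ p ∈ K) {x : E}
    (hx : x ∉ K) : ∃ δ : Derivation ℤ E E, δ x = 1 ∧ ∀ y ∈ K, δ y = 0 := by
  obtain ⟨M, hKM, hmax⟩ := exists_le_maximal_notMem hx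
  have hM : ∀ y : E, y ^ p ∈ M := fun y => hKM (hK y)
  have hadjoin : Algebra.adjoin M {x} = ⊤ := by
    rw [← IntermediateField.adjoin_simple_toSubalgebra_of_isAlgebraic
      (isIntegral_of_pow_mem hM x).isAlgebraic, adjoin_simple_eq_top_of_maximal hM hmax,
      IntermediateField.top_toSubalgebra]
  obtain ⟨δ, hδ⟩ := Derivation.exists_eq_one_of_adjoin_eq_top hadjoin
    (by simp [minpoly_eq_X_pow_sub_C hM hmax.1, derivative_X_pow])
  exact ⟨δ.restrictScalars ℤ, hδ, fun y hy => δ.map_algebraMap ⟨y, hKM hy⟩⟩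

end PthPowers

section ReducedMonomial

variable {p : ℕ} {ι L : Type*} [Fintype ι] [CommMonoid L]

def reducedMonomial (t : ι → L) (α : ι → Fin p) : L :=
  ∏ i, t i ^ (α i : ℕ)

theorem map_reducedMonomial {M G : Type*} [CommMonoid M] [FunLike G M L] [MonoidHomClass G M L]
    (f : G) (t : ι → M) (α : ι → Fin p) :
    f (reducedMonomial t α) = reducedMonomial (fun i => f (t i)) α := by
  simp [reducedMonomial]

theorem reducedMonomial_mul (t : ι → L) (α β : ι → Fin p) :
    reducedMonomial t α * reducedMonomial t β =
      (∏ i, t i ^ ((α i + β i : ℕ) / p)) ^ p * reducedMonomial t (α + β) := by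
  simp only [reducedMonomial, ← Finset.prod_mul_distrib, ← Finset.prod_pow]
  refine Finset.prod_congr rfl fun i _ => ?_
  rw [← pow_add, ← pow_mul, ← pow_add, Pi.add_apply, Fin.val_add, Nat.div_add_mod']

theorem reducedMonomial_cons {n : ℕ} (t : Fin (n + 1) → L)
    (k : Fin p) (β : Fin n → Fin p) :
    reducedMonomial t (Fin.cons k β : Fin (n + 1) → Fin p) =
      t 0 ^ (k : ℕ) * reducedMonomial (fun i => t i.succ) β := by
  simp [reducedMonomial, Fin.prod_univ_succ]

variable [Fact p.Prime]

theorem reducedMonomial_zero (t : ι → L) : reducedMonomial t (0 : ι → Fin p) = 1 := by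
  simp [reducedMonomial]

theorem reducedMonomial_single [DecidableEq ι] (t : ι → L) (i : ι) :
    reducedMonomial t (Pi.single i 1 : ι → Fin p) = t i := by
  rw [reducedMonomial, Finset.prod_eq_single i (fun k _ hk => by simp [hk]) (by simp)]
  simp [Nat.one_mod_eq_one.mpr (Fact.out : p.Prime).ne_one]

end ReducedMonomial

def LinearIndependentOverPow (p : ℕ) {κ L : Type*} [Fintype κ] [CommSemiring L]
    (x : κ → L) : Prop :=
  ∀ c : κ → L, ∑ k, c k ^ p * x k = 0 → ∀ k, c k = 0

theorem linearIndependentOverPow_reducedMonomial_of_linearIndependent_D {p : ℕ} [Fact p.Prime]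
    {L : Type*} [Field L] [CharP L p] : ∀ {n : ℕ} (t : Fin n → L),
      LinearIndependent L (fun i => KaehlerDifferential.D ℤ L (t i)) →
      LinearIndependentOverPow p (reducedMonomial (p := p) t)
  | 0, t, _ => fun c hc α => by
    rw [Fintype.sum_subsingleton _ α] at hc
    simpa [reducedMonomial, (Fact.out : p.Prime).ne_zero] using hc
  | n + 1, t, hli => by
    obtain ⟨δ, hδ0, hδ⟩ := (linearIndependent_D_iff_exists_derivation t).mp hli 0
    have hK : ∀ y : L, y ^ p ∈ δ.constSubfield := fun y => by
      simp [Derivation.mem_constSubfield, Derivation.leibniz_pow]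
    have ht0 : t 0 ∉ δ.constSubfield := by simp [Derivation.mem_constSubfield, hδ0]
    have ih := linearIndependentOverPow_reducedMonomial_of_linearIndependent_D (p := p)
      (fun i => t i.succ) (hli.comp Fin.succ (Fin.succ_injective n))
    intro c hc α
    set a : Fin p → L := fun k =>
      ∑ β, c (Fin.cons k β) ^ p * reducedMonomial (fun i => t i.succ) β with ha
    have ha_mem : ∀ k, a k ∈ δ.constSubfield := fun k =>
      sum_mem fun β _ => mul_mem (hK _) (prod_mem fun i _ => pow_mem (hδ _ i.succ_ne_zero) _)
    have hrel : ∑ k, a k * t 0 ^ (k : ℕ) = 0 := by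
      rw [← hc, ← (Fin.consEquiv fun _ => Fin p).sum_comp, Fintype.sum_prod_type]
      refine Finset.sum_congr rfl fun k _ => ?_
      rw [Finset.sum_mul]
      refine Finset.sum_congr rfl fun β _ => ?_
      change _ = c (Fin.cons k β) ^ p * reducedMonomial t (Fin.cons k β)
      rw [reducedMonomial_cons]
      ring
    have ha_zero : ∀ k, a k = 0 := fun k => congrArg Subtype.val <|
      Fintype.linearIndependent_iff.mp (Subfield.linearIndependent_pow_of_notMem hK ht0)
        (fun k => ⟨a k, ha_mem k⟩) hrel k
    rw [← Fin.cons_self_tail α]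
    exact ih _ (ha_zero _) _

/-- `F` as an `F`-algebra through the Frobenius `a ↦ a ^ p`, i.e. a copy of `F^{1/p}`. -/
def FrobeniusTwist (F : Type u) (_p : ℕ) : Type u := F

instance (F : Type u) (p : ℕ) [Field F] : Field (FrobeniusTwist F p) := ‹Field F›

instance (F : Type u) (p : ℕ) [Field F] [ExpChar F p] : Algebra F (FrobeniusTwist F p) :=
  (frobenius F p).toAlgebra

theorem LinearIndependentOverPow.map_of_isSeparableFieldExt {F : Type u} {E : Type v} [Field F]
    [Field E] [Algebra F E] {p : ℕ} [Fact p.Prime] [CharP F p] (hsep : IsSeparableFieldExt F E)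
    {κ : Type*} [Fintype κ] {x : κ → F} (hx : LinearIndependentOverPow p x) :
    LinearIndependentOverPow p fun k => algebraMap F E (x k) := by
  intro c hc
  let K := FrobeniusTwist F p
  let xK : κ → K := x
  have hxK : LinearIndependent F xK := Fintype.linearIndependent_iff.mpr fun g hg => hx g hg
  have hli : LinearIndependent E fun k => (1 : E) ⊗ₜ[F] xK k :=
    Module.Flat.linearIndependent_one_tmul hxK
  have : IsReduced (K ⊗[F] E) := hsep K
  have : IsReduced (E ⊗[F] K) :=
    isReduced_of_injective (Algebra.TensorProduct.comm F E K) (AlgEquiv.injective _)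
  have : CharP (E ⊗[F] K) p := charP_of_injective_algebraMap' F p
  -- `(∑ c_k ⊗ x_k^{1/p}) ^ p = (∑ c_k ^ p x_k) ⊗ 1 = 0`, and `E ⊗_F F^{1/p}` is reduced.
  have hz : (∑ k, c k ⊗ₜ[F] xK k) ^ p = 0 := by
    have hpow : ∀ k, (c k ⊗ₜ[F] xK k) ^ p = (c k ^ p * algebraMap F E (x k)) ⊗ₜ[F] (1 : K) :=
      fun k => by
        rw [Algebra.TensorProduct.tmul_pow, show xK k ^ p = algebraMap F K (x k) from rfl,
          Algebra.algebraMap_eq_smul_one, tmul_smul, smul_tmul', Algebra.smul_def, mul_comm]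
    rw [sum_pow_char, Finset.sum_congr rfl fun k _ => hpow k, ← sum_tmul, hc, zero_tmul]
  have hz0 := IsReduced.eq_zero _ ⟨p, hz⟩
  refine Fintype.linearIndependent_iff.mp hli c ?_
  simpa only [smul_tmul', smul_eq_mul, mul_one] using hz0

section PIndependence

variable {p : ℕ} [Fact p.Prime] {ι E : Type*} [Fintype ι] [Field E] [CharP E p]

theorem LinearIndependentOverPow.linearIndependent_fieldRange {κ : Type*} [Fintype κ]
    {x : κ → E} (hx : LinearIndependentOverPow p x) :
    LinearIndependent (frobenius E p).fieldRange x := by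
  refine Fintype.linearIndependent_iff.mpr fun g hg k => ?_
  choose y hy using fun k => RingHom.mem_fieldRange.mp (g k).2
  have hrel : ∑ k, y k ^ p * x k = 0 := by
    rw [← hg]
    exact Finset.sum_congr rfl fun k _ => by
      change y k ^ p * x k = (g k : E) * x k
      rw [← hy k, frobenius_def]
  exact Subtype.ext (by simp [← hy k, hx y hrel k])

theorem LinearIndependentOverPow.notMem_adjoin [DecidableEq ι] {t : ι → E}
    (ht : LinearIndependentOverPow p (reducedMonomial (p := p) t)) (j : ι) :
    t j ∉ IntermediateField.adjoin (frobenius E p).fieldRange (t '' {i | i ≠ j}) := by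
  set pE := (frobenius E p).fieldRange
  set V := Submodule.span pE (reducedMonomial t '' {α : ι → Fin p | α j = 0})
  -- `E^p[tᵢ : i ≠ j]` is spanned over `E^p` by the reduced monomials free of `tⱼ`.
  have hclosure : ∀ y ∈ Submonoid.closure (t '' {i | i ≠ j}),
      ∃ c : E, ∃ α : ι → Fin p, α j = 0 ∧ y = c ^ p * reducedMonomial t α := by
    intro y hy
    induction hy using Submonoid.closure_induction with
    | mem y hy =>
      obtain ⟨i, hi, rfl⟩ := hy
      exact ⟨1, Pi.single i 1, Pi.single_eq_of_ne' hi 1, by simp [reducedMonomial_single]⟩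
    | one => exact ⟨1, 0, rfl, by simp [reducedMonomial_zero]⟩
    | mul y z _ _ hy hz =>
      obtain ⟨c, α, hα, rfl⟩ := hy
      obtain ⟨d, β, hβ, rfl⟩ := hz
      refine ⟨c * d * ∏ i, t i ^ ((α i + β i : ℕ) / p), α + β, by simp [hα, hβ], ?_⟩
      rw [mul_pow, mul_pow, mul_assoc (c ^ p * d ^ p), ← reducedMonomial_mul]
      ring
  have hadjoin : (Algebra.adjoin pE (t '' {i | i ≠ j}) : Set E) ⊆ V := by
    rw [← Subalgebra.coe_toSubmodule, Algebra.adjoin_eq_span, SetLike.coe_subset_coe,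
      Submodule.span_le]
    intro y hy
    obtain ⟨c, α, hα, rfl⟩ := hclosure y hy
    exact V.smul_mem ⟨c ^ p, c, rfl⟩ (Submodule.subset_span ⟨α, hα, rfl⟩)
  intro hj
  rw [← IntermediateField.mem_toSubalgebra, IntermediateField.adjoin_toSubalgebra_of_isAlgebraic
    fun x _ => (Subfield.isIntegral_of_pow_mem (K := pE) (fun y => ⟨y, rfl⟩) x).isAlgebraic] at hj
  refine ht.linearIndependent_fieldRange.notMem_span_image
    (s := {α | α ≠ Pi.single j 1}) (x := Pi.single j 1) (by simp) ?_
  rw [reducedMonomial_single]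
  refine Submodule.span_mono (Set.image_mono fun α hα h => ?_) (hadjoin hj)
  exact (Fact.out : p.Prime).ne_one (by simpa [h] using hα)

theorem LinearIndependentOverPow.exists_derivation [DecidableEq ι] {t : ι → E}
    (ht : LinearIndependentOverPow p (reducedMonomial (p := p) t)) (j : ι) :
    ∃ δ : Derivation ℤ E E, δ (t j) = 1 ∧ ∀ i ≠ j, δ (t i) = 0 := by
  set K := (IntermediateField.adjoin (frobenius E p).fieldRange (t '' {i | i ≠ j})).toSubfield
  obtain ⟨δ, hδ, hδK⟩ := Subfield.exists_derivation_of_notMem (K := K)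
    (fun y => IntermediateField.algebraMap_mem _ (⟨y ^ p, y, rfl⟩ : (frobenius E p).fieldRange))
    (ht.notMem_adjoin j)
  exact ⟨δ, hδ, fun i hi => hδK _ (IntermediateField.subset_adjoin _ _ ⟨i, hi, rfl⟩)⟩

end PIndependence

/-- If `F ⊆ E` is a separable field extension in characteristic `p > 0` and
`t₁, …, tₙ ∈ F` have linearly independent differentials in `Ω¹_{F/ℤ}`, then their images
in `E` have linearly independent differentials in `Ω¹_{E/ℤ}`. -/
theorem stmt_3 (F : Type u) (E : Type v) [Field F] [Field E] [Algebra F E]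
    (p : ℕ) (hp : p.Prime) [CharP F p]
    (hsep : IsSeparableFieldExt F E)
    (n : ℕ) (t : Fin n → F)
    (hli : LinearIndependent F (fun i : Fin n => KaehlerDifferential.D ℤ F (t i))) :
    LinearIndependent E (fun i : Fin n => KaehlerDifferential.D ℤ E (algebraMap F E (t i))) := by
  have : Fact p.Prime := ⟨hp⟩
  have : CharP E p := charP_of_injective_algebraMap (algebraMap F E).injective p
  have hF := linearIndependentOverPow_reducedMonomial_of_linearIndependent_D (p := p) t hli
  have hE : LinearIndependentOverPow p (reducedMonomial (p := p) fun i => algebraMap F E (t i)) := by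
    simpa only [map_reducedMonomial] using hF.map_of_isSeparableFieldExt hsep
  exact (linearIndependent_D_iff_exists_derivation _).mpr hE.exists_derivation
end

section
/- Let F be a field of characteristic p > 0 and t₁, …, tₙ ∈ F elements with dt₁, …, dtₙ linearly independent in Ω¹_{F/ℤ}. Set E = F(tₙ^{1/p}). Then the differentials dt₁, …, dt_{n-1} remain linearly independent in Ω¹_{E/ℤ}. -/
/-!
Differentials over a field are detected by derivations: `dt₀, …, dt_{n-1}` are independent in
`Ω¹_E` as soon as there are derivations `D_j` of `E` with `D_j tᵢ = δᵢⱼ`. Independence over `F`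
gives derivations `d_j` of `F` with `d_j tᵢ = δᵢⱼ`, in particular `d_j tₙ = 0`. Since `dtₙ ≠ 0`,
`tₙ` is not a `p`-th power, so `E = F[X]/(X^p - tₙ)`, and a derivation of `F` killing `tₙ` extends
coefficientwise to `E`.
-/

open Polynomial IntermediateField

theorem LinearIndependent.exists_linearMap_apply_eq_ite {K V ι : Type*} [DivisionRing K]
    [AddCommGroup V] [Module K V] [DecidableEq ι] {v : ι → V} (hv : LinearIndependent K v)
    (j : ι) : ∃ f : V →ₗ[K] K, ∀ i, f (v i) = if i = j then 1 else 0 := by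
  obtain ⟨f, hf⟩ := LinearMap.exists_extend (Finsupp.lapply j ∘ₗ hv.repr)
  refine ⟨f, fun i => ?_⟩
  have := LinearMap.congr_fun hf ⟨v i, Submodule.subset_span ⟨i, rfl⟩⟩
  simpa [hv.repr_eq_single i, Finsupp.single_apply] using this

theorem Derivation.map_pow_char_eq_zero {R A M : Type*} [CommSemiring R] [CommSemiring A]
    [Algebra R A] [AddCommMonoid M] [Module A M] [Module R M] [IsScalarTower R A M]
    (p : ℕ) [CharP A p] (D : Derivation R A M) (a : A) : D (a ^ p) = 0 := by
  rw [leibniz_pow, ← Nat.cast_smul_eq_nsmul A, CharP.cast_eq_zero, zero_smul]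

theorem Derivation.exists_extend_adjoin_simple {R F L : Type*} [CommRing R] [Field F] [Field L]
    [Algebra R F] [Algebra F L] [Algebra R L] [IsScalarTower R F L] {r : L} (hr : IsIntegral F r)
    (d : Derivation R F F) (hd : ∀ i, d ((minpoly F r).coeff i) = 0) :
    ∃ D : Derivation R F⟮r⟯ F⟮r⟯, ∀ a, D (algebraMap F F⟮r⟯ a) = algebraMap F F⟮r⟯ (d a) := by
  let d' : Derivation R F[X] F[X] := PolynomialModule.equivPolynomialSelf.compDer d.mapCoeffs
  let ψ : F[X] →ₐ[R] F⟮r⟯ :=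
    ((adjoinRootEquivAdjoin F hr).toAlgHom.comp (AdjoinRoot.mkₐ _)).restrictScalars R
  have hψ : Function.Surjective ψ :=
    (adjoinRootEquivAdjoin F hr).surjective.comp AdjoinRoot.mk_surjective
  have hker : ∀ g, ψ g = 0 ↔ minpoly F r ∣ g := fun g => by
    simp [ψ, AdjoinRoot.mk_eq_zero]
  have hψC : ∀ a, ψ (C a) = algebraMap F F⟮r⟯ a := fun a => by
    simp [ψ, ← AdjoinRoot.algebraMap_eq]
  have hcoeff : ∀ g i, (d' g).coeff i = d (g.coeff i) := fun _ _ => rfl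
  have hmin : d' (minpoly F r) = 0 := by
    ext i
    rw [hcoeff, hd, coeff_zero]
  refine ⟨Derivation.liftOfSurjective hψ (d := d') fun g hg => ?_, fun a => ?_⟩
  · obtain ⟨q, rfl⟩ := (hker g).1 hg
    exact (hker _).2 (by simp [hmin])
  · rw [← hψC, Derivation.liftOfSurjective_apply, ← hψC]
    congr 1
    ext i
    rw [hcoeff, coeff_C, coeff_C]
    split_ifs <;> simp

theorem minpoly_eq_X_pow_sub_C_of_prime {F L : Type*} [Field F] [Field L] [Algebra F L]
    {p : ℕ} (hp : p.Prime) {a : F} (ha : ∀ b : F, b ^ p ≠ a) {r : L}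
    (hr : r ^ p = algebraMap F L a) : minpoly F r = X ^ p - C a :=
  (minpoly.eq_of_irreducible_of_monic (X_pow_sub_C_irreducible_of_prime hp ha) (by simp [hr])
    (monic_X_pow_sub_C _ hp.ne_zero)).symm

namespace KaehlerDifferential

theorem exists_derivation_apply_eq_ite {R S ι : Type*} [CommRing R] [Field S] [Algebra R S]
    [DecidableEq ι] {s : ι → S} (hs : LinearIndependent S fun i => D R S (s i)) (j : ι) :
    ∃ d : Derivation R S S, ∀ i, d (s i) = if i = j then 1 else 0 :=
  let ⟨f, hf⟩ := hs.exists_linearMap_apply_eq_ite j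
  ⟨f.compDer (D R S), hf⟩

theorem linearIndependent_D_of_exists_derivation {R S ι : Type*} [CommRing R] [CommRing S]
    [Algebra R S] [DecidableEq ι] {s : ι → S}
    (h : ∀ j, ∃ d : Derivation R S S, ∀ i, d (s i) = if i = j then 1 else 0) :
    LinearIndependent S fun i => D R S (s i) := by
  choose d hd using h
  exact .of_pairwise_dual_eq_zero_one _ (fun j => (d j).liftKaehlerDifferential)
    (fun j i hji => by simp [hd, hji.symm]) (fun i => by simp [hd])

end KaehlerDifferential

/-- Let `F` be a field of characteristic `p > 0` and `t₀, …, tₙ ∈ F` elements with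
linearly independent differentials in `Ω¹_{F/ℤ}`.  Set `E = F(tₙ^{1/p})`, the extension
obtained by adjoining a `p`-th root of the last element.  Then the differentials of the
(images of the) remaining elements `t₀, …, t_{n-1}` are linearly independent
in `Ω¹_{E/ℤ}`. -/
theorem stmt_6 (F : Type*) [Field F] (p : ℕ) (hp : p.Prime) [CharP F p]
    (n : ℕ) (t : Fin (n + 1) → F)
    (hli : LinearIndependent F (fun i : Fin (n + 1) => KaehlerDifferential.D ℤ F (t i)))
    (r : AlgebraicClosure F)
    (hr : r ^ p = algebraMap F (AlgebraicClosure F) (t (Fin.last n)))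
    (E : IntermediateField F (AlgebraicClosure F)) (hE : E = IntermediateField.adjoin F {r}) :
    LinearIndependent E (fun i : Fin n =>
      KaehlerDifferential.D ℤ E (algebraMap F E (t i.castSucc))) := by
  subst hE
  have hnot_pow : ∀ b : F, b ^ p ≠ t (Fin.last n) := fun b hb =>
    hli.ne_zero (Fin.last n) (hb ▸ (KaehlerDifferential.D ℤ F).map_pow_char_eq_zero p b)
  have hmin := minpoly_eq_X_pow_sub_C_of_prime hp hnot_pow hr
  have hint : IsIntegral F r :=
    minpoly.ne_zero_iff.1 (hmin ▸ (monic_X_pow_sub_C _ hp.ne_zero).ne_zero)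
  refine KaehlerDifferential.linearIndependent_D_of_exists_derivation fun j => ?_
  obtain ⟨d, hd⟩ := KaehlerDifferential.exists_derivation_apply_eq_ite hli j.castSucc
  have hd_last : d (t (Fin.last n)) = 0 := by simp [hd, (Fin.castSucc_lt_last j).ne']
  obtain ⟨D, hD⟩ := d.exists_extend_adjoin_simple hint fun i => by
    rw [hmin, coeff_sub, coeff_X_pow, coeff_C]
    split_ifs <;> simp [hd_last]
  exact ⟨D, fun i => by simp [hD, hd, Fin.castSucc_inj]⟩
end

section
/- Let k be a field of characteristic p ≥ 3, n ≥ 1, and let F be the algebraic closure of k(t₁,…,tₙ). Then the polynomial y^p − y z^{p−1} + Σᵢ tᵢ xᵢ^p is irreducible in F[x₁,…,xₙ,y,z]; equivalently, the hypersurface X ⊂ ℙ^{n+1} it defines is geometrically integral. -/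
/-!
Since `F` is algebraically closed of characteristic `p`, write `tᵢ = sᵢ ^ p`; then the
polynomial is `(y + Σ sᵢ xᵢ) ^ p - y z ^ (p - 1)`. As `t₁ ≠ 0`, also `s₁ ≠ 0`, so
`x₁ ↦ y + Σ sᵢ xᵢ` (fixing the other variables) is an automorphism of `F[x, y, z]`. It carries
`x₁ ^ p - y z ^ (p - 1)` to our polynomial, and that one is linear in `y` with coprime
coefficients `x₁ ^ p` and `z ^ (p - 1)`, hence irreducible.
-/

open MvPolynomial

namespace MvPolynomial

variable {R σ : Type*} [CommRing R]

theorem irreducible_X_pow_sub_X_mul_X_pow [IsDomain R] [UniqueFactorizationMonoid R] {a b c : σ}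
    (hab : a ≠ b) (hcb : c ≠ b) (hac : a ≠ c) (m r : ℕ) :
    Irreducible (X a ^ m - X b * X c ^ r : MvPolynomial σ R) := by
  classical
  let E := (renameEquiv R (Equiv.optionSubtypeNe b).symm).trans (optionEquivLeft R {j // j ≠ b})
  have hE : E (X a ^ m - X b * X c ^ r) =
      Polynomial.C (-X ⟨c, hcb⟩ ^ r) * Polynomial.X + Polynomial.C (X ⟨a, hab⟩ ^ m) := by
    simp [E, Equiv.optionSubtypeNe_symm_of_ne hab, Equiv.optionSubtypeNe_symm_of_ne hcb]
    ring
  have hca : IsRelPrime (X ⟨c, hcb⟩ : MvPolynomial {j // j ≠ b} R) (X ⟨a, hab⟩) :=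
    X_prime.irreducible.isRelPrime_iff_not_dvd.mpr (by simpa [X_dvd_X] using hac.symm)
  rw [← MulEquiv.irreducible_iff E, hE]
  exact Polynomial.irreducible_C_mul_X_add_C (neg_ne_zero.mpr (pow_ne_zero _ (X_ne_zero _)))
    hca.pow.neg_left

variable [DecidableEq σ]

theorem aeval_update_X_of_mem_supported {a : σ} (f : MvPolynomial σ R) {q : MvPolynomial σ R}
    (hq : q ∈ supported R {a}ᶜ) : aeval (Function.update X a f) q = q := by
  rw [mem_supported] at hq
  refine (hom_congr_vars (f₂ := RingHom.id _) (by ext; simp) (fun i hi _ => ?_) rfl).trans rfl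
  simp [Function.update_of_ne (hq hi : i ≠ a)]

noncomputable def shearAlgEquiv (a : σ) (c : Rˣ) (q : MvPolynomial σ R)
    (hq : q ∈ supported R {a}ᶜ) : MvPolynomial σ R ≃ₐ[R] MvPolynomial σ R :=
  AlgEquiv.ofAlgHom (aeval (Function.update X a (C (c : R) * X a + q)))
    (aeval (Function.update X a (C ((c⁻¹ : Rˣ) : R) * (X a - q))))
    (algHom_ext fun i => by
      rcases eq_or_ne i a with rfl | h
      · simp only [AlgHom.comp_apply, aeval_X, Function.update_self, map_mul, map_sub, aeval_C,
          algebraMap_eq, aeval_update_X_of_mem_supported _ hq, AlgHom.id_apply]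
        rw [add_sub_cancel_right, ← mul_assoc, ← C_mul, Units.inv_mul, C_1, one_mul]
      · simp [Function.update_of_ne h])
    (algHom_ext fun i => by
      rcases eq_or_ne i a with rfl | h
      · simp only [AlgHom.comp_apply, aeval_X, Function.update_self, map_mul, map_add, aeval_C,
          algebraMap_eq, aeval_update_X_of_mem_supported _ hq, AlgHom.id_apply]
        rw [← mul_assoc, ← C_mul, Units.mul_inv, C_1, one_mul, sub_add_cancel]
      · simp [Function.update_of_ne h])

variable {a : σ} {c : Rˣ} {q : MvPolynomial σ R} (hq : q ∈ supported R {a}ᶜ)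

@[simp]
theorem shearAlgEquiv_X_self : shearAlgEquiv a c q hq (X a) = C (c : R) * X a + q := by
  simp [shearAlgEquiv]

@[simp]
theorem shearAlgEquiv_X_of_ne {j : σ} (h : j ≠ a) : shearAlgEquiv a c q hq (X j) = X j := by
  simp [shearAlgEquiv, Function.update_of_ne h]

end MvPolynomial

theorem stmt_9_general (k : Type*) [Field k] (p : ℕ) (hp : p.Prime) [CharP k p]
    (n : ℕ) (hn : 1 ≤ n)
    (F : Type*) [Field F] [Algebra (FractionRing (MvPolynomial (Fin n) k)) F]
    [IsAlgClosure (FractionRing (MvPolynomial (Fin n) k)) F]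
    (t : Fin n → F)
    (ht : ∀ i, t i = algebraMap (FractionRing (MvPolynomial (Fin n) k)) F
      (algebraMap (MvPolynomial (Fin n) k) _ (MvPolynomial.X i))) :
    Irreducible ((X (Sum.inr 0) : MvPolynomial (Fin n ⊕ Fin 2) F) ^ p -
      X (Sum.inr 0) * X (Sum.inr 1) ^ (p - 1) +
      ∑ i : Fin n, C (t i) * X (Sum.inl i) ^ p) := by
  have : Fact p.Prime := ⟨hp⟩
  have : CharP F p := charP_of_injective_algebraMap' (FractionRing (MvPolynomial (Fin n) k)) p
  have : IsAlgClosed F := IsAlgClosure.isAlgClosed (FractionRing (MvPolynomial (Fin n) k))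
  choose s hs using fun i => IsAlgClosed.exists_pow_nat_eq (t i) hp.pos
  let i₀ : Fin n := ⟨0, hn⟩
  have ht₀ : t i₀ ≠ 0 := by simp [ht, X_ne_zero]
  have hs₀ : s i₀ ≠ 0 := fun h => ht₀ (by rw [← hs, h, zero_pow hp.ne_zero])
  let q : MvPolynomial (Fin n ⊕ Fin 2) F :=
    X (Sum.inr 0) + ∑ i ∈ Finset.univ.erase i₀, C (s i) * X (Sum.inl i)
  have hq : q ∈ supported F {Sum.inl i₀}ᶜ :=
    Subalgebra.add_mem _ (X_mem_supported.mpr (by simp)) <| Subalgebra.sum_mem _ fun i hi =>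
      Subalgebra.mul_mem _ (Subalgebra.algebraMap_mem _ _)
        (X_mem_supported.mpr (by simpa using Finset.ne_of_mem_erase hi))
  let E := shearAlgEquiv (Sum.inl i₀) (Units.mk0 _ hs₀) q hq
  have hEx : E (X (Sum.inl i₀)) ^ p = X (Sum.inr 0) ^ p + ∑ i, C (t i) * X (Sum.inl i) ^ p :=
    calc E (X (Sum.inl i₀)) ^ p = (X (Sum.inr 0) + ∑ i, C (s i) * X (Sum.inl i)) ^ p := by
          rw [shearAlgEquiv_X_self, Units.val_mk0, ← Finset.add_sum_erase _ _ (Finset.mem_univ i₀)]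
          ring
      _ = _ := by simp only [add_pow_char, sum_pow_char, mul_pow, ← C_pow, hs]
  convert (irreducible_X_pow_sub_X_mul_X_pow (a := Sum.inl i₀) (b := Sum.inr 0) (c := Sum.inr 1)
    (by simp) (by simp) (by simp) p (p - 1)).map E using 1
  rw [map_sub, map_mul, map_pow, hEx, map_pow, shearAlgEquiv_X_of_ne _ (by simp),
    shearAlgEquiv_X_of_ne _ (by simp)]
  ring

/-- Let `k` be a field of characteristic `p ≥ 3`, `n ≥ 1`, and let `F` be the algebraic
closure of the rational function field `k(t₁,…,tₙ)`.  Then the polynomial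
`y^p - y z^{p-1} + Σᵢ tᵢ xᵢ^p` is irreducible in `F[x₁,…,xₙ,y,z]`; equivalently, the
hypersurface `X ⊂ ℙ^{n+1}` it defines is geometrically integral.
Here the variables `x₁,…,xₙ` are indexed by `Sum.inl i`, while `y = X (Sum.inr 0)` and
`z = X (Sum.inr 1)`. -/
theorem stmt_9 (k : Type*) [Field k] (p : ℕ) (hp : p.Prime) (hp3 : 3 ≤ p) [CharP k p]
    (n : ℕ) (hn : 1 ≤ n)
    (F : Type*) [Field F] [Algebra (FractionRing (MvPolynomial (Fin n) k)) F]
    [IsAlgClosure (FractionRing (MvPolynomial (Fin n) k)) F]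
    (t : Fin n → F)
    (ht : ∀ i, t i = algebraMap (FractionRing (MvPolynomial (Fin n) k)) F
      (algebraMap (MvPolynomial (Fin n) k) _ (MvPolynomial.X i))) :
    Irreducible ((X (Sum.inr 0) : MvPolynomial (Fin n ⊕ Fin 2) F) ^ p -
      X (Sum.inr 0) * X (Sum.inr 1) ^ (p - 1) +
      ∑ i : Fin n, C (t i) * X (Sum.inl i) ^ p) :=
  stmt_9_general k p hp n hn F t ht
end

section
/- Let F be a field of characteristic 2 and t₁, t₂ ∈ F. The polynomial y₁³ + t₁x₁²y₁ + y₂³ + t₂x₂²y₂ is irreducible in F[x₁, x₂, y₁, y₂] whenever t₁ ≠ 0 and t₂ ≠ 0. -/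
/-!
Regard the polynomial as a monic cubic in `y₂` over `R = F[x₂, y₁, x₁]`:
`y₂³ + (t₂x₂²) y₂ + y₁(y₁² + t₁x₁²)`. It is Eisenstein at the prime
`P = (x₂, y₁, x₁ - 1)`: the lower coefficients lie in `P`, and the constant one is not
in `P²` because the evaluation `x₂ ↦ 0, y₁ ↦ ε, x₁ ↦ 1` into the dual numbers `F[ε]`
kills `P²` but sends it to `t₁ε ≠ 0`.
-/

open MvPolynomial DualNumber TrivSqZeroExt

namespace TrivSqZeroExt

theorem comap_kerIdeal_sq_le_ker {A R M : Type*} [CommRing A] [CommSemiring R]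
    [AddCommMonoid M] [Module R M] [Module Rᵐᵒᵖ M] [IsCentralScalar R M]
    (ψ : A →+* TrivSqZeroExt R M) : (kerIdeal R M).comap ψ ^ 2 ≤ RingHom.ker ψ := by
  simpa [RingHom.ker] using Ideal.le_comap_pow ψ (K := kerIdeal R M) 2

end TrivSqZeroExt

namespace Polynomial

theorem irreducible_X_pow_add_C_mul_X_add_C {R : Type*} [CommRing R] [IsDomain R]
    {P : Ideal R} [hP : P.IsPrime] {n : ℕ} (hn : 2 ≤ n) {a b : R} (ha : a ∈ P) (hb : b ∈ P)
    (hb2 : b ∉ P ^ 2) : Irreducible (X ^ n + C a * X + C b) := by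
  have hlow : (C a * X + C b).degree < (X ^ n : R[X]).degree := by
    rw [degree_X_pow]
    exact degree_linear_lt.trans_le (by exact_mod_cast hn)
  have hmonic : (X ^ n + (C a * X + C b)).Monic :=
    monic_X_pow_add (by rwa [← degree_X_pow (R := R)])
  have hdeg : (X ^ n + (C a * X + C b)).natDegree = n := by
    rw [natDegree_add_eq_left_of_degree_lt hlow, natDegree_X_pow]
  rw [add_assoc]
  refine IsEisensteinAt.irreducible ⟨?_, fun {i} hi => ?_, ?_⟩ hP hmonic.isPrimitive (by omega)
  · rw [hmonic.leadingCoeff]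
    exact P.ne_top_iff_one.mp hP.ne_top
  · rw [hdeg] at hi
    rcases i with _ | _ | i
    · simpa [coeff_X_pow, show 0 ≠ n by omega] using hb
    · simpa [coeff_X_pow, show 1 ≠ n by omega, coeff_X] using ha
    · simp [coeff_X_pow, show i + 2 ≠ n by omega]
  · simpa [coeff_X_pow, show 0 ≠ n by omega] using hb2

end Polynomial

theorem stmt_18_general (F : Type*) [Field F] (t₁ t₂ : F) (h₁ : t₁ ≠ 0) :
    Irreducible ((X 2 : MvPolynomial (Fin 4) F) ^ 3 + C t₁ * X 0 ^ 2 * X 2 +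
      X 3 ^ 3 + C t₂ * X 1 ^ 2 * X 3) := by
  -- `e` makes `y₂` the polynomial variable, with coefficients in `F[x₂, y₁, x₁]`
  let e := (renameEquiv F (Equiv.swap 0 3)).trans (finSuccEquiv F 3)
  have he : e ((X 2 : MvPolynomial (Fin 4) F) ^ 3 + C t₁ * X 0 ^ 2 * X 2 +
      X 3 ^ 3 + C t₂ * X 1 ^ 2 * X 3) = Polynomial.X ^ 3 + Polynomial.C (C t₂ * X 0 ^ 2) *
      Polynomial.X + Polynomial.C (X 1 ^ 3 + C t₁ * X 2 ^ 2 * X 1) := by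
    have hC (t : F) : finSuccEquiv F 3 (C t) = Polynomial.C (C t) := (finSuccEquiv F 3).commutes t
    have h1 : finSuccEquiv F 3 (X 1) = Polynomial.C (X 0) := finSuccEquiv_X_succ (j := 0)
    have h2 : finSuccEquiv F 3 (X 2) = Polynomial.C (X 1) := finSuccEquiv_X_succ (j := 1)
    have h3 : finSuccEquiv F 3 (X 3) = Polynomial.C (X 2) := finSuccEquiv_X_succ (j := 2)
    simp only [e, AlgEquiv.trans_apply, renameEquiv_apply, map_add, map_mul, map_pow, rename_X,
      algHom_C, algebraMap_eq, Equiv.swap_apply_left, Equiv.swap_apply_right,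
      Equiv.swap_apply_of_ne_of_ne, ne_eq, Fin.reduceEq, one_ne_zero, not_false_eq_true,
      finSuccEquiv_X_zero, hC, h1, h2, h3]
    ring
  rw [← MulEquiv.irreducible_iff e.toMulEquiv]
  change Irreducible (e _)
  rw [he]
  let ψ : MvPolynomial (Fin 3) F →ₐ[F] F[ε] := aeval ![0, ε, 1]
  have : (kerIdeal F F).IsPrime := RingHom.ker_isPrime _
  refine Polynomial.irreducible_X_pow_add_C_mul_X_add_C (P := (kerIdeal F F).comap ψ) (by norm_num)
    (by simp [ψ, kerIdeal]) (by simp [ψ, kerIdeal]) fun hsq => h₁ ?_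
  have hψ : ψ (X 1 ^ 3 + C t₁ * X 2 ^ 2 * X 1) = t₁ • ε := by
    simp [ψ, pow_succ, Algebra.smul_def]
  simpa [hψ] using congrArg snd (comap_kerIdeal_sq_le_ker ψ.toRingHom hsq)

/-- Let `F` be a field of characteristic `2` and `t₁, t₂ ∈ F` nonzero.  Then the
polynomial `y₁³ + t₁x₁²y₁ + y₂³ + t₂x₂²y₂` is irreducible in `F[x₁, x₂, y₁, y₂]`.
Here `x₁ = X 0`, `x₂ = X 1`, `y₁ = X 2`, `y₂ = X 3`. -/
theorem stmt_18 (F : Type*) [Field F] [CharP F 2] (t₁ t₂ : F) (h₁ : t₁ ≠ 0) (h₂ : t₂ ≠ 0) :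
    Irreducible ((X 2 : MvPolynomial (Fin 4) F) ^ 3 + C t₁ * X 0 ^ 2 * X 2 +
      X 3 ^ 3 + C t₂ * X 1 ^ 2 * X 3) :=
  stmt_18_general F t₁ t₂ h₁
end
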